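/- arXiv:2603.06834 — 6 statements merged into one kernel-verified Lean document; each statement's English description precedes it below -/
import Mathlib

section
/- Let l ≥ 1 and let F : ℂ^l → ℂ be real-Fréchet differentiable at every point. For k = 1,…,l define f_k(z) = ∂F/∂z̄_k(z) + conj(∂F/∂z_k(z)). Suppose there exist positive real numbers σ_1,…,σ_l such that for every θ ∈ ℝ and every z = (z_1,…,z_l) ∈ ℂ^l one has Re F(e^{iσ_1θ}z_1,…,e^{iσ_lθ}z_l) = Re F(z_1,…,z_l). Then for every z ∈ ℂ^l, Im ( Σ_{k=1}^{l} σ_k · f_k(z) · conj(z_k) ) = 0. -/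
/-!
Differentiating `θ ↦ Re F(e^{iσ₁θ}z₁, …, e^{iσₗθ}zₗ)` at `θ = 0` gives `Re DF(z)(v) = 0` for the
generator `v_k = iσ_k z_k`. Splitting `DF(z)` into Wirtinger parts,
`Re DF(z)(v) = Re Σ_k f_k(z) conj(v_k)`, and `Re (f · conj (iσz)) = σ Im (f · conj z)`.
-/

/-- The Wirtinger derivative `∂F/∂z_m` at `z`, defined from the real Fréchet derivative:
`∂F/∂z_m(z) = (1/2)(DF(z)(e_m) − i·DF(z)(i·e_m))`. -/
noncomputable def wirtingerDz {l : ℕ} (F : (Fin l → ℂ) → ℂ) (z : Fin l → ℂ) (m : Fin l) : ℂ :=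
  (1 / 2 : ℂ) * (fderiv ℝ F z (Pi.single m 1) - Complex.I * fderiv ℝ F z (Pi.single m Complex.I))

/-- The Wirtinger derivative `∂F/∂z̄_m` at `z`, defined from the real Fréchet derivative:
`∂F/∂z̄_m(z) = (1/2)(DF(z)(e_m) + i·DF(z)(i·e_m))`. -/
noncomputable def wirtingerDzBar {l : ℕ} (F : (Fin l → ℂ) → ℂ) (z : Fin l → ℂ) (m : Fin l) : ℂ :=
  (1 / 2 : ℂ) * (fderiv ℝ F z (Pi.single m 1) + Complex.I * fderiv ℝ F z (Pi.single m Complex.I))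

open Complex ComplexConjugate

lemma hasDerivAt_phaseRotation {ι : Type*} [Fintype ι] (σ : ι → ℝ) (z : ι → ℂ) :
    HasDerivAt (fun θ : ℝ => fun k => exp (I * (σ k * θ)) * z k) (fun k => I * σ k * z k) 0 := by
  rw [hasDerivAt_pi]
  intro k
  have hphase : HasDerivAt (fun θ : ℝ => I * (σ k * (θ : ℂ))) (I * σ k) 0 := by
    simpa using ((ofRealCLM.hasDerivAt (x := 0)).const_mul (σ k : ℂ)).const_mul I
  simpa using hphase.cexp.mul_const (z k)

lemma re_fderiv_eq_zero_of_re_comp_const {E : Type*} [NormedAddCommGroup E] [NormedSpace ℝ E]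
    {F : E → ℂ} {γ : ℝ → E} {v : E} {t : ℝ} (hF : DifferentiableAt ℝ F (γ t))
    (hγ : HasDerivAt γ v t) (hconst : ∀ s, (F (γ s)).re = (F (γ t)).re) :
    (fderiv ℝ F (γ t) v).re = 0 := by
  have hderiv : HasDerivAt (fun s => (F (γ s)).re) (fderiv ℝ F (γ t) v).re t :=
    reCLM.hasFDerivAt.comp_hasDerivAt t (hF.hasFDerivAt.comp_hasDerivAt t hγ)
  rw [funext hconst] at hderiv
  exact hderiv.unique (hasDerivAt_const t _)

-- `L w = (∂L) w + (∂̄L) w̄` and `Re (∂L · w) = Re (conj (∂L) · w̄)`.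
lemma LinearMap.re_apply_eq_re_mul_conj (L : ℂ →ₗ[ℝ] ℂ) (w : ℂ) :
    (L w).re = (((1 / 2 : ℂ) * (L 1 + I * L I) + conj ((1 / 2 : ℂ) * (L 1 - I * L I))) *
      conj w).re := by
  have hw : w = w.re • (1 : ℂ) + w.im • I := by simp
  rw [hw, map_add, map_smul, map_smul]
  simp [mul_re, mul_im]
  ring

lemma re_fderiv_apply_eq_re_sum_wirtinger {l : ℕ} (F : (Fin l → ℂ) → ℂ) (z v : Fin l → ℂ) :
    (fderiv ℝ F z v).re =
      (∑ k, (wirtingerDzBar F z k + conj (wirtingerDz F z k)) * conj (v k)).re := by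
  have hv : v = ∑ k, Pi.single k (v k) := (Finset.univ_sum_single v).symm
  rw [hv, map_sum, re_sum, re_sum]
  refine Finset.sum_congr rfl fun k _ => ?_
  have hLk := ((fderiv ℝ F z : (Fin l → ℂ) →ₗ[ℝ] ℂ).comp
    (LinearMap.single ℝ (fun _ => ℂ) k)).re_apply_eq_re_mul_conj (v k)
  simpa [wirtingerDz, wirtingerDzBar] using hLk

theorem stmt0_general (l : ℕ) (F : (Fin l → ℂ) → ℂ)
    (hF : Differentiable ℝ F) (σ : Fin l → ℝ)
    (hinv : ∀ θ : ℝ, ∀ z : Fin l → ℂ,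
      (F (fun k => Complex.exp (Complex.I * (σ k * θ)) * z k)).re = (F z).re) :
    ∀ z : Fin l → ℂ,
      (∑ k, (σ k : ℂ) * (wirtingerDzBar F z k + (starRingEnd ℂ) (wirtingerDz F z k)) *
        (starRingEnd ℂ) (z k)).im = 0 := by
  intro z
  have hrot₀ : (fun k => exp (I * (σ k * (0 : ℝ))) * z k) = z := by simp
  have hgen := re_fderiv_eq_zero_of_re_comp_const (hF _) (hasDerivAt_phaseRotation σ z)
    (fun θ => by rw [hinv, hinv])
  rw [hrot₀, re_fderiv_apply_eq_re_sum_wirtinger] at hgen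
  rw [← hgen, im_sum, re_sum]
  refine Finset.sum_congr rfl fun k _ => ?_
  simp only [map_mul, conj_I, conj_ofReal, mul_re, mul_im, neg_re, neg_im, I_re, I_im, ofReal_re,
    ofReal_im]
  ring

/-- if `F : ℂ^l → ℂ` is real-differentiable and gauge invariant with positive
weights `σ_k` (the real part of `F` is unchanged by `z_k ↦ e^{iσ_kθ} z_k`), then with
`f_k = ∂F/∂z̄_k + conj (∂F/∂z_k)` one has `Im (Σ_k σ_k f_k(z) conj (z_k)) = 0`. -/
theorem stmt0 (l : ℕ) (hl : 1 ≤ l) (F : (Fin l → ℂ) → ℂ)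
    (hF : Differentiable ℝ F) (σ : Fin l → ℝ) (hσ : ∀ k, 0 < σ k)
    (hinv : ∀ θ : ℝ, ∀ z : Fin l → ℂ,
      (F (fun k => Complex.exp (Complex.I * (σ k * θ)) * z k)).re = (F z).re) :
    ∀ z : Fin l → ℂ,
      (∑ k, (σ k : ℂ) * (wirtingerDzBar F z k + (starRingEnd ℂ) (wirtingerDz F z k)) *
        (starRingEnd ℂ) (z k)).im = 0 :=
  stmt0_general l F hF σ hinv
end

section
/- Let l ≥ 1, n ≥ 1 and let f : ℂ^l → ℂ be real-Fréchet differentiable with Df(0) = 0 and ‖Df(z) − Df(z')‖ ≤ C · Σ_{j=1}^{l} |z_j − z'_j| for all z, z' ∈ ℂ^l and some constant C > 0. Let u, u' : ℝⁿ → ℂ^l be differentiable, with components u_m and u'_m. Then there is a constant C' > 0 (depending only on C and l) such that for every x ∈ ℝⁿ: ‖D(f ∘ u)(x) − D(f ∘ u')(x)‖ ≤ C' · Σ_{m=1}^{l} Σ_{j=1}^{l} |u_j(x)| · ‖D(u_m − u'_m)(x)‖ + C' · Σ_{m=1}^{l} Σ_{j=1}^{l} |u_j(x) − u'_j(x)|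 · ‖D u'_m(x)‖, where D denotes the real Fréchet derivative and ‖·‖ the operator norm. -/
open ContinuousLinearMap


/-- pointwise gradient estimate for compositions `f ∘ u` where the
quadratic-type nonlinearity `f : ℂ^l → ℂ` has `Df(0) = 0` and a Lipschitz real Fréchet
derivative, and `u, u' : ℝⁿ → ℂ^l` are differentiable.  There is `C' > 0` depending only
on `C` and `l` such that for all such `u, u'` and every `x`:
`‖D(f∘u)(x) − D(f∘u')(x)‖ ≤ C' Σ_m Σ_j |u_j(x)| ‖D(u_m − u'_m)(x)‖
  + C' Σ_m Σ_j |u_j(x) − u'_j(x)| ‖Du'_m(x)‖`. -/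
theorem stmt2 (l n : ℕ) (hl : 1 ≤ l) (hn : 1 ≤ n) (C : ℝ) (hC : 0 < C) :
    ∃ C' : ℝ, 0 < C' ∧
      ∀ f : (Fin l → ℂ) → ℂ, Differentiable ℝ f → fderiv ℝ f 0 = 0 →
        (∀ z z' : Fin l → ℂ, ‖fderiv ℝ f z - fderiv ℝ f z'‖ ≤ C * ∑ j, ‖z j - z' j‖) →
        ∀ u u' : (Fin n → ℝ) → (Fin l → ℂ),
          Differentiable ℝ u → Differentiable ℝ u' →
          ∀ x : Fin n → ℝ,
            ‖fderiv ℝ (f ∘ u) x - fderiv ℝ (f ∘ u') x‖ ≤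
              C' * (∑ m, ∑ j, ‖u x j‖ * ‖fderiv ℝ (fun y => u y m - u' y m) x‖) +
              C' * (∑ m, ∑ j, ‖u x j - u' x j‖ * ‖fderiv ℝ (fun y => u' y m) x‖) := by
  refine ⟨C, hC, ?_⟩
  intro f hf hf0 hLip u u' hu hu' x
  -- operator-norm bound via components
  have hpi : ∀ (L : (Fin n → ℝ) →L[ℝ] (Fin l → ℂ)),
      ‖L‖ ≤ ∑ m, ‖(ContinuousLinearMap.proj (R := ℝ) (φ := fun _ : Fin l => ℂ) m).comp L‖ := by
    intro L
    refine L.opNorm_le_bound (Finset.sum_nonneg fun _ _ => norm_nonneg _) fun v => ?_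
    calc ‖L v‖ ≤ ∑ m, ‖L v m‖ := by
          refine (pi_norm_le_iff_of_nonneg (Finset.sum_nonneg fun _ _ => norm_nonneg _)).2 fun m => ?_
          exact Finset.single_le_sum (fun _ _ => norm_nonneg _) (Finset.mem_univ m)
      _ ≤ ∑ m, ‖(ContinuousLinearMap.proj (R := ℝ) (φ := fun _ : Fin l => ℂ) m).comp L‖ * ‖v‖ := by
          refine Finset.sum_le_sum fun m _ => ?_
          exact ((ContinuousLinearMap.proj (R := ℝ) (φ := fun _ : Fin l => ℂ) m).comp L).le_opNorm v
      _ = (∑ m, ‖(ContinuousLinearMap.proj (R := ℝ) (φ := fun _ : Fin l => ℂ) m).comp L‖) * ‖v‖ := by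
          rw [Finset.sum_mul]
  -- component derivatives
  have hcomp : ∀ (v : (Fin n → ℝ) → (Fin l → ℂ)) (hv : Differentiable ℝ v) (m : Fin l),
      fderiv ℝ (fun y => v y m) x
        = (ContinuousLinearMap.proj (R := ℝ) (φ := fun _ : Fin l => ℂ) m).comp (fderiv ℝ v x) := by
    intro v hv m
    have := ((ContinuousLinearMap.proj (R := ℝ) (φ := fun _ : Fin l => ℂ) m).hasFDerivAt.comp x
      (hv x).hasFDerivAt)
    exact this.fderiv
  set A := fderiv ℝ f (u x) with hA
  set A' := fderiv ℝ f (u' x) with hA'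
  set B := fderiv ℝ u x with hB
  set B' := fderiv ℝ u' x with hB'
  have hfu : fderiv ℝ (f ∘ u) x = A.comp B := fderiv_comp x (hf _) (hu _)
  have hfu' : fderiv ℝ (f ∘ u') x = A'.comp B' := fderiv_comp x (hf _) (hu' _)
  have key : fderiv ℝ (f ∘ u) x - fderiv ℝ (f ∘ u') x
      = A.comp (B - B') + (A - A').comp B' := by
    rw [hfu, hfu', ContinuousLinearMap.comp_sub, ContinuousLinearMap.sub_comp]
    abel
  -- norm of A
  have hAnorm : ‖A‖ ≤ C * ∑ j, ‖u x j‖ := by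
    have := hLip (u x) 0
    simpa [hf0, hA] using this
  have hAA' : ‖A - A'‖ ≤ C * ∑ j, ‖u x j - u' x j‖ := hLip (u x) (u' x)
  -- norm of B - B' via components
  have hBB' : ‖B - B'‖ ≤ ∑ m, ‖fderiv ℝ (fun y => u y m - u' y m) x‖ := by
    refine (hpi (B - B')).trans_eq ?_
    refine Finset.sum_congr rfl fun m _ => ?_
    congr 1
    have h1 : fderiv ℝ (fun y => u y m - u' y m) x
        = fderiv ℝ (fun y => u y m) x - fderiv ℝ (fun y => u' y m) x := by
      apply fderiv_sub
      · exact ((ContinuousLinearMap.proj (R := ℝ) (φ := fun _ : Fin l => ℂ) m).hasFDerivAt.comp x (hu x).hasFDerivAt).differentiableAt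
      · exact ((ContinuousLinearMap.proj (R := ℝ) (φ := fun _ : Fin l => ℂ) m).hasFDerivAt.comp x (hu' x).hasFDerivAt).differentiableAt
    rw [ContinuousLinearMap.comp_sub, h1, hcomp u hu m, hcomp u' hu' m]
  have hB'norm : ‖B'‖ ≤ ∑ m, ‖fderiv ℝ (fun y => u' y m) x‖ := by
    refine (hpi B').trans_eq ?_
    exact Finset.sum_congr rfl fun m _ => by rw [hcomp u' hu' m]
  have main : ‖fderiv ℝ (f ∘ u) x - fderiv ℝ (f ∘ u') x‖
      ≤ (C * ∑ j, ‖u x j‖) * (∑ m, ‖fderiv ℝ (fun y => u y m - u' y m) x‖)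
        + (C * ∑ j, ‖u x j - u' x j‖) * (∑ m, ‖fderiv ℝ (fun y => u' y m) x‖) := by
    rw [key]
    refine (norm_add_le _ _).trans (add_le_add ?_ ?_)
    · refine (ContinuousLinearMap.opNorm_comp_le _ _).trans ?_
      exact mul_le_mul hAnorm hBB' (norm_nonneg _)
        (by positivity)
    · refine (ContinuousLinearMap.opNorm_comp_le _ _).trans ?_
      exact mul_le_mul hAA' hB'norm (norm_nonneg _) (by positivity)
  refine main.trans_eq ?_
  have e : ∀ a b : Fin l → ℝ, (C * ∑ j, a j) * ∑ m, b m = C * ∑ m, ∑ j, a j * b m := by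
    intro a b
    rw [mul_assoc, Finset.sum_mul_sum, Finset.sum_comm]
  rw [e, e]
end

section
/- Let l ≥ 1 and let F : ℂ^l → ℂ be real-Fréchet differentiable at every point and homogeneous of degree 3, i.e. F(λ·z) = λ³·F(z) for every real λ > 0 and every z ∈ ℂ^l. Define f_k(z) = ∂F/∂z̄_k(z) + conj(∂F/∂z_k(z)) for k = 1,…,l. Then for every z ∈ ℂ^l: Re ( Σ_{k=1}^{l} f_k(z) · conj(z_k) ) = 3 · Re F(z). -/
/-- Euler identity for a real-differentiable function homogeneous of degree 3. -/
theorem euler_deg3 (l : ℕ) (F : (Fin l → ℂ) → ℂ) (hF : Differentiable ℝ F)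
    (hhom : ∀ lam : ℝ, 0 < lam → ∀ z : Fin l → ℂ, F (lam • z) = (lam : ℂ) ^ 3 * F z)
    (z : Fin l → ℂ) : fderiv ℝ F z z = 3 * F z := by
  have hsm : HasDerivAt (fun t : ℝ => t • z) z 1 := by
    simpa using (hasDerivAt_id (1:ℝ)).smul_const z
  have h1 : HasDerivAt (fun t : ℝ => F (t • z)) (fderiv ℝ F z z) 1 := by
    have := (hF ((1:ℝ) • z)).hasFDerivAt.comp_hasDerivAt 1 hsm
    simp only [one_smul] at this; exact this
  have h2 : HasDerivAt (fun t : ℝ => ((t : ℂ) ^ 3 * F z)) (3 * F z) 1 := by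
    have hc : HasDerivAt (fun t : ℝ => (t : ℂ)) 1 1 := by
      have := (hasDerivAt_id (1:ℝ)).ofReal_comp; simp only [Complex.ofReal_one] at this; exact this
    have h3 := ((hc.mul hc).mul hc).mul_const (F z)
    have hfun : (fun t : ℝ => ((t : ℂ) ^ 3 * F z)) = fun t : ℝ => (t:ℂ)*(t:ℂ)*(t:ℂ)*F z := by
      funext t; ring
    rw [hfun]
    refine HasDerivAt.congr_deriv (by exact h3) ?_
    simp only [Pi.mul_apply]
    push_cast
    ring
  have heq : (fun t : ℝ => F (t • z)) =ᶠ[nhds (1:ℝ)] fun t : ℝ => ((t : ℂ) ^ 3 * F z) := by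
    filter_upwards [eventually_gt_nhds (by norm_num : (0:ℝ) < 1)] with t ht
    exact hhom t ht z
  have h1' : HasDerivAt (fun t : ℝ => ((t : ℂ) ^ 3 * F z)) (fderiv ℝ F z z) 1 :=
    h1.congr_of_eventuallyEq heq.symm
  exact h1'.unique h2

/-- Euler-type identity: if `F : ℂ^l → ℂ` is real-differentiable everywhere
and homogeneous of degree `3` (`F(λz) = λ³ F(z)` for real `λ > 0`), then with
`f_k = ∂F/∂z̄_k + conj (∂F/∂z_k)` one has `Re (Σ_k f_k(z) conj (z_k)) = 3 Re F(z)`. -/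
theorem stmt4 (l : ℕ) (hl : 1 ≤ l) (F : (Fin l → ℂ) → ℂ) (hF : Differentiable ℝ F)
    (hhom : ∀ lam : ℝ, 0 < lam → ∀ z : Fin l → ℂ, F (lam • z) = (lam : ℂ) ^ 3 * F z) :
    ∀ z : Fin l → ℂ,
      (∑ k, (wirtingerDzBar F z k + (starRingEnd ℂ) (wirtingerDz F z k)) *
        (starRingEnd ℂ) (z k)).re = 3 * (F z).re := by
  intro z
  have heuler := euler_deg3 l F hF hhom z
  have key : ∀ k, ((wirtingerDzBar F z k + (starRingEnd ℂ) (wirtingerDz F z k)) *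
      (starRingEnd ℂ) (z k)).re = (fderiv ℝ F z (Pi.single k (z k))).re := by
    intro k
    have hsingle : Pi.single k (z k) =
        (z k).re • (Pi.single k (1:ℂ) : Fin l → ℂ) +
          (z k).im • (Pi.single k Complex.I : Fin l → ℂ) := by
      ext j
      rcases eq_or_ne j k with rfl | h
      · simp [Complex.real_smul]
      · simp [Pi.single_eq_of_ne h]
    rw [hsingle, map_add, map_smul, map_smul]
    set a := fderiv ℝ F z (Pi.single k (1:ℂ)) with ha
    set b := fderiv ℝ F z (Pi.single k Complex.I) with hb
    simp only [wirtingerDz, wirtingerDzBar, ← ha, ← hb]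
    simp [Complex.add_re, Complex.add_im, Complex.mul_re, Complex.mul_im, Complex.sub_re,
      Complex.sub_im, Complex.I_re, Complex.I_im, Complex.conj_re, Complex.conj_im,
      Complex.smul_re, Complex.div_re, Complex.div_im, Complex.normSq]
    ring
  rw [Complex.re_sum]
  simp_rw [key]
  rw [← Complex.re_sum, ← map_sum, Finset.univ_sum_single, heuler]
  simp [Complex.mul_re]
end

section
/- Let d ≥ 1, b > 0, and let F : (Fin d → ℝ) → ℝ be supermodular on the nonnegative cone, i.e. for all indices i ≠ j, all reals h, k > 0, and every y with all coordinates nonnegative: F(y + h·e_i + k·e_j) + F(y) ≥ F(y + h·e_i) + F(y + k·e_j). Define D : ℝ × (Fin d → ℝ) → ℝ by D(y₀, y) = y₀^b · ( F(y) − Σ_{i=1}^{d} F(y_i·e_i) ), where y_i·e_i denotes the vector with i-th coordinate y_i and all other coordinates 0. Then D is supermodular on the nonnegative cone of ℝ^{1+d}: for any two distinct coordinates of the vector (y₀, y₁, …, y_d), any increments h, k > 0, and any (y₀, y) with y₀ ≥ 0 and all y_i ≥ 0, the corresponding supermodularity inequality holds for D. -/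
/-!
Write `D(y₀, y) = y₀^b · G(y)` with `G(y) = F(y) − Σᵢ F(yᵢ eᵢ)`. Subtracting a separable sum does
not change mixed second differences, so `G` is supermodular. Supermodularity of `F` also says that
the increment of `F` in direction `eᵢ` grows as the other coordinates grow; comparing the point `y`
with `yᵢ eᵢ` shows that `G` is nondecreasing in every coordinate. For the pairs of coordinates not
involving `y₀`, supermodularity of `D` is that of `G` scaled by `y₀^b ≥ 0`; for a pair involving
`y₀`, it is the nonnegativity of the product of the increment of `y₀^b` and the increment of `G`.
-/

/-- A function `G : ℝ^m → ℝ` is supermodular on the nonnegative cone if for all distinct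
coordinates `i ≠ j`, all increments `h, k > 0` and every `y` with nonnegative coordinates,
`G(y + h·e_i + k·e_j) + G(y) ≥ G(y + h·e_i) + G(y + k·e_j)`. -/
def SupermodularOnNonnegCone {m : ℕ} (G : (Fin m → ℝ) → ℝ) : Prop :=
  ∀ i j : Fin m, i ≠ j → ∀ h k : ℝ, 0 < h → 0 < k →
    ∀ y : Fin m → ℝ, (∀ s, 0 ≤ y s) →
      G (y + Pi.single i h) + G (y + Pi.single j k) ≤
        G (y + Pi.single i h + Pi.single j k) + G y

open Finset

noncomputable def interactionPart {m : ℕ} (F : (Fin m → ℝ) → ℝ) (y : Fin m → ℝ) : ℝ :=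
  F y - ∑ i, F (Pi.single i (y i))

lemma sum_apply_add_single_add_single {ι : Type*} [Fintype ι] [DecidableEq ι]
    (φ : ι → ℝ → ℝ) {i j : ι} (hij : i ≠ j) (h k : ℝ) (y : ι → ℝ) :
    ∑ s, φ s ((y + Pi.single i h + Pi.single j k : ι → ℝ) s) + ∑ s, φ s (y s) =
      ∑ s, φ s ((y + Pi.single i h : ι → ℝ) s) + ∑ s, φ s ((y + Pi.single j k : ι → ℝ) s) := by
  rw [← sum_add_distrib, ← sum_add_distrib]
  refine sum_congr rfl fun s _ => ?_
  by_cases hsi : s = i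
  · subst hsi
    simp [hij, add_comm]
  · by_cases hsj : s = j
    · subst hsj
      simp [hsi, add_comm]
    · simp [hsi, hsj]

namespace Fin

variable {m : ℕ} {M : Type*} [AddMonoid M]

lemma tail_add_single_zero (v : Fin (m + 1) → M) (h : M) :
    tail (v + Pi.single 0 h) = tail v := by
  ext s
  simp [tail]

lemma tail_add_single_succ (v : Fin (m + 1) → M) (j : Fin m) (k : M) :
    tail (v + Pi.single j.succ k) = tail v + Pi.single j k := by
  ext s
  simp [tail, Pi.single_apply]

end Fin

namespace SupermodularOnNonnegCone

variable {m : ℕ} {F : (Fin m → ℝ) → ℝ}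

lemma increment_le_increment_add_single (hF : SupermodularOnNonnegCone F) {i j : Fin m}
    (hij : i ≠ j) {k t : ℝ} (hk : 0 < k) (ht : 0 ≤ t) (y : Fin m → ℝ) (hy : ∀ s, 0 ≤ y s) :
    F (y + Pi.single i k) - F y ≤ F (y + Pi.single j t + Pi.single i k) - F (y + Pi.single j t) := by
  rcases ht.eq_or_lt with rfl | ht
  · simp
  · have := hF i j hij k t hk ht y hy
    rw [add_right_comm]
    linarith

lemma increment_le_increment_add_sum (hF : SupermodularOnNonnegCone F) {i : Fin m} {k : ℝ}
    (hk : 0 < k) {y w : Fin m → ℝ} (hy : ∀ s, 0 ≤ y s) (hw : ∀ s, 0 ≤ w s)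
    {S : Finset (Fin m)} (hiS : i ∉ S) :
    F (y + Pi.single i k) - F y ≤
      F (y + ∑ s ∈ S, Pi.single s (w s) + Pi.single i k) - F (y + ∑ s ∈ S, Pi.single s (w s)) := by
  induction S using Finset.induction_on with
  | empty => simp
  | @insert t S htS ih =>
    rw [mem_insert, not_or] at hiS
    have hyS : ∀ s, 0 ≤ (y + ∑ s ∈ S, Pi.single s (w s)) s := fun s => by
      simp only [Pi.add_apply, Finset.sum_apply]
      exact add_nonneg (hy s)
        (sum_nonneg fun r _ => (Pi.single_nonneg.2 (hw r) : (0 : Fin m → ℝ) ≤ _) s)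
    rw [sum_insert htS, ← add_assoc, add_right_comm y]
    exact (ih hiS.2).trans (hF.increment_le_increment_add_single hiS.1 hk (hw t) _ hyS)

lemma increment_single_le_increment (hF : SupermodularOnNonnegCone F) (i : Fin m) {k : ℝ}
    (hk : 0 < k) {y : Fin m → ℝ} (hy : ∀ s, 0 ≤ y s) :
    F (Pi.single i (y i + k)) - F (Pi.single i (y i)) ≤ F (y + Pi.single i k) - F y := by
  have hsplit : Pi.single i (y i) + ∑ s ∈ univ.erase i, Pi.single s (y s) = y := by
    rw [add_sum_erase univ (fun s => Pi.single s (y s)) (mem_univ i), univ_sum_single]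
  have := hF.increment_le_increment_add_sum hk (y := Pi.single i (y i))
    (fun s => (Pi.single_nonneg.2 (hy i) : (0 : Fin m → ℝ) ≤ _) s) hy (notMem_erase i univ)
  rwa [hsplit, ← Pi.single_add] at this

lemma interactionPart_le_add_single (hF : SupermodularOnNonnegCone F) (j : Fin m) {k : ℝ}
    (hk : 0 < k) {y : Fin m → ℝ} (hy : ∀ s, 0 ≤ y s) :
    interactionPart F y ≤ interactionPart F (y + Pi.single j k) := by
  have hsum : ∑ s, F (Pi.single s ((y + Pi.single j k : Fin m → ℝ) s)) -
      ∑ s, F (Pi.single s (y s)) = F (Pi.single j (y j + k)) - F (Pi.single j (y j)) := by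
    rw [← sum_sub_distrib, sum_eq_single j]
    · simp
    · intro s _ hsj
      simp [hsj]
    · simp
  have := hF.increment_single_le_increment j hk hy
  unfold interactionPart
  linarith

lemma interactionPart (hF : SupermodularOnNonnegCone F) :
    SupermodularOnNonnegCone (interactionPart F) := by
  intro i j hij h k hh hk y hy
  have := hF i j hij h k hh hk y hy
  have := sum_apply_add_single_add_single (fun s t => F (Pi.single s t)) hij h k y
  unfold _root_.interactionPart
  linarith

theorem mul_comp_tail {G : (Fin m → ℝ) → ℝ} (hG : SupermodularOnNonnegCone G)
    (hG_mono : ∀ j k, 0 < k → ∀ y : Fin m → ℝ, (∀ s, 0 ≤ y s) → G y ≤ G (y + Pi.single j k))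
    {φ : ℝ → ℝ} (hφ_nonneg : ∀ t, 0 ≤ t → 0 ≤ φ t) (hφ_mono : MonotoneOn φ (Set.Ici 0)) :
    SupermodularOnNonnegCone (fun v : Fin (m + 1) → ℝ => φ (v 0) * G (Fin.tail v)) := by
  intro i j hij h k hh hk v hv
  have htail : ∀ s, 0 ≤ Fin.tail v s := fun s => hv s.succ
  have hφ_le : ∀ {c}, 0 < c → φ (v 0) ≤ φ (v 0 + c) := fun hc =>
    hφ_mono (hv 0) (Set.mem_Ici.2 (by linarith [hv 0])) (by linarith)
  induction i using Fin.cases with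
  | zero =>
    induction j using Fin.cases with
    | zero => exact absurd rfl hij
    | succ j =>
      simp only [Pi.add_apply, Fin.tail_add_single_zero, Fin.tail_add_single_succ,
        Pi.single_eq_same, Pi.single_eq_of_ne (Fin.succ_ne_zero j).symm, add_zero]
      rw [add_comm (φ (v 0 + h) * _), add_comm (φ (v 0 + h) * _)]
      exact mul_add_mul_le_mul_add_mul (hφ_le hh) (hG_mono j k hk _ htail)
  | succ i =>
    induction j using Fin.cases with
    | zero =>
      simp only [Pi.add_apply, Fin.tail_add_single_zero, Fin.tail_add_single_succ,
        Pi.single_eq_same, Pi.single_eq_of_ne (Fin.succ_ne_zero i).symm, add_zero]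
      rw [add_comm (φ (v 0 + k) * _)]
      exact mul_add_mul_le_mul_add_mul (hφ_le hk) (hG_mono i h hh _ htail)
    | succ j =>
      simp only [Pi.add_apply, Fin.tail_add_single_succ,
        Pi.single_eq_of_ne (Fin.succ_ne_zero i).symm, Pi.single_eq_of_ne (Fin.succ_ne_zero j).symm,
        add_zero, ← mul_add]
      have hij' : i ≠ j := fun hij' => hij (congrArg Fin.succ hij')
      exact mul_le_mul_of_nonneg_left (hG i j hij' h k hh hk _ htail) (hφ_nonneg _ (hv 0))

end SupermodularOnNonnegCone

theorem stmt5_general (d : ℕ) (b : ℝ) (hb : 0 < b)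
    (F : (Fin d → ℝ) → ℝ) (hF : SupermodularOnNonnegCone F) :
    SupermodularOnNonnegCone (fun v : Fin (d + 1) → ℝ =>
      v 0 ^ b * (F (fun i => v i.succ) - ∑ i, F (Pi.single i (v i.succ)))) :=
  hF.interactionPart.mul_comp_tail (fun j _ hk _ hy => hF.interactionPart_le_add_single j hk hy)
    (fun _ ht => Real.rpow_nonneg ht b) (fun _ hs _ _ hst => Real.rpow_le_rpow hs hst hb.le)

/-- if `F : ℝ^d → ℝ` is supermodular on the nonnegative cone and `b > 0`,
then `D(y₀, y) = y₀^b (F(y) − Σ_i F(y_i e_i))` is supermodular on the nonnegative cone of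
`ℝ^{1+d}` (coordinate `0` playing the role of `y₀`). -/
theorem stmt5 (d : ℕ) (hd : 1 ≤ d) (b : ℝ) (hb : 0 < b)
    (F : (Fin d → ℝ) → ℝ) (hF : SupermodularOnNonnegCone F) :
    SupermodularOnNonnegCone (fun v : Fin (d + 1) → ℝ =>
      v 0 ^ b * (F (fun i => v i.succ) - ∑ i, F (Pi.single i (v i.succ)))) :=
  stmt5_general d b hb F hF
end

section
/- Let d ≥ 1 and let F : (Fin d → ℝ) → ℝ be supermodular on the nonnegative cone, i.e. for all indices i ≠ j, all reals h, k > 0, and every y with all coordinates nonnegative: F(y + h·e_i + k·e_j) + F(y) ≥ F(y + h·e_i) + F(y + k·e_j). Define G(y) = F(y) − Σ_{i=1}^{d} F(y_i·e_i). Then G is nondecreasing in each variable on the nonnegative cone: if y and y' have all coordinates nonnegative and y_i ≤ y'_i for every i, then G(y) ≤ G(y'). -/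
theorem le_of_forall_le_add_single {ι β γ : Type*} [Fintype ι] [DecidableEq ι]
    [AddCommGroup β] [PartialOrder β] [IsOrderedAddMonoid β] [Preorder γ]
    {Φ : (ι → β) → γ} {x x' : ι → β} (hxx' : x ≤ x')
    (hΦ : ∀ z ∈ Set.Icc x x', ∀ j, x j ≠ x' j → ∀ h, 0 < h → Φ z ≤ Φ (z + Pi.single j h)) :
    Φ x ≤ Φ x' := by
  suffices ∀ s : Finset ι, Φ x ≤ Φ (s.piecewise x' x) by simpa using this Finset.univ
  intro s
  induction s using Finset.induction_on with
  | empty => simp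
  | @insert j s hjs ih =>
    have hstep : (insert j s).piecewise x' x = s.piecewise x' x + Pi.single j (x' j - x j) := by
      rw [Finset.piecewise_insert, Pi.update_eq_sub_add_single, s.piecewise_eq_of_notMem _ _ hjs,
        Pi.single_sub]
      abel
    rw [hstep]
    rcases (hxx' j).eq_or_lt with heq | hlt
    · simpa [heq] using ih
    · exact ih.trans <| hΦ _ (s.piecewise_mem_Icc' hxx') j hlt.ne _ (sub_pos.2 hlt)

namespace SupermodularOnNonnegCone

variable {m : ℕ} {F : (Fin m → ℝ) → ℝ}

theorem single_sub_le (hF : SupermodularOnNonnegCone F) (i : Fin m) {h : ℝ} (hh : 0 < h)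
    {y : Fin m → ℝ} (hy : 0 ≤ y) :
    F (Pi.single i (y i + h)) - F (Pi.single i (y i)) ≤ F (y + Pi.single i h) - F y := by
  have hxy : Pi.single i (y i) ≤ y := by
    intro j
    rcases eq_or_ne j i with rfl | hj
    · simp
    · simpa [hj] using hy j
  rw [Pi.single_add]
  refine le_of_forall_le_add_single (Φ := fun z => F (z + Pi.single i h) - F z) hxy ?_
  rintro z ⟨hz, -⟩ j hj k hk
  have hji : i ≠ j := by rintro rfl; simp at hj
  have hz₀ : 0 ≤ z := (Pi.single_nonneg.2 (hy i)).trans hz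
  have := hF i j hji h k hh hk z hz₀
  rw [add_right_comm z (Pi.single j k)]
  linarith

theorem sub_sum_single_le_add_single (hF : SupermodularOnNonnegCone F) (j : Fin m) {h : ℝ}
    (hh : 0 < h) {z : Fin m → ℝ} (hz : 0 ≤ z) :
    F z - ∑ i, F (Pi.single i (z i)) ≤
      F (z + Pi.single j h) - ∑ i, F (Pi.single i ((z + Pi.single j h : Fin m → ℝ) i)) := by
  have hsum : ∑ i, F (Pi.single i ((z + Pi.single j h : Fin m → ℝ) i)) -
      ∑ i, F (Pi.single i (z i)) = F (Pi.single j (z j + h)) - F (Pi.single j (z j)) := by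
    rw [← Finset.sum_sub_distrib, Fintype.sum_eq_single j fun i hi => by simp [hi.symm]]
    simp
  linarith [hF.single_sub_le j hh hz]

end SupermodularOnNonnegCone

theorem stmt6_general (d : ℕ) (F : (Fin d → ℝ) → ℝ)
    (hF : SupermodularOnNonnegCone F) :
    ∀ y y' : Fin d → ℝ, (∀ i, 0 ≤ y i) → (∀ i, 0 ≤ y' i) → (∀ i, y i ≤ y' i) →
      F y - ∑ i, F (Pi.single i (y i)) ≤ F y' - ∑ i, F (Pi.single i (y' i)) := by
  intro y y' hy _ hyy'
  refine le_of_forall_le_add_single (Φ := fun z => F z - ∑ i, F (Pi.single i (z i))) hyy' ?_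
  exact fun z hz j _ h hh => hF.sub_sum_single_le_add_single j hh fun i => (hy i).trans (hz.1 i)

/-- if `F : ℝ^d → ℝ` is supermodular on the nonnegative cone, then
`G(y) = F(y) − Σ_i F(y_i e_i)` is nondecreasing in each variable on the nonnegative cone. -/
theorem stmt6 (d : ℕ) (hd : 1 ≤ d) (F : (Fin d → ℝ) → ℝ)
    (hF : SupermodularOnNonnegCone F) :
    ∀ y y' : Fin d → ℝ, (∀ i, 0 ≤ y i) → (∀ i, 0 ≤ y' i) → (∀ i, y i ≤ y' i) →
      F y - ∑ i, F (Pi.single i (y i)) ≤ F y' - ∑ i, F (Pi.single i (y' i)) :=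
  stmt6_general d F hF
end

section
/- Let I ⊆ ℝ be an open interval with 0 ∈ I. Let α ∈ ℝ, β > 0 and q > 1 be real numbers, set γ = (β·q)^{−1/(q−1)}, and define f(r) = α − r + β·r^q for r ≥ 0. Let G : I → ℝ be a continuous nonnegative function such that f(G(t)) ≥ 0 for all t ∈ I, and assume α < (1 − 1/q)·γ. Then: (i) if G(0) < γ, then G(t) < γ for all t ∈ I; (ii) if G(0) > γ, then G(t) > γ for all t ∈ I. -/
/-- bootstrap lemma: let `I ⊆ ℝ` be an open interval containing `0`,
`α ∈ ℝ`, `β > 0`, `q > 1`, `γ = (βq)^{−1/(q−1)}` and `f(r) = α − r + βr^q`.  If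
`G : I → ℝ` is continuous, nonnegative, satisfies `f(G(t)) ≥ 0` on `I`, and
`α < (1 − 1/q)γ`, then `G(0) < γ` forces `G < γ` on `I`, while `G(0) > γ` forces
`G > γ` on `I`. -/
theorem stmt7 (I : Set ℝ) (hIopen : IsOpen I) (hIconv : Convex ℝ I) (h0 : (0 : ℝ) ∈ I)
    (α β q : ℝ) (hβ : 0 < β) (hq : 1 < q)
    (γ : ℝ) (hγ : γ = (β * q) ^ (-(1 / (q - 1))))
    (G : ℝ → ℝ) (hGcont : ContinuousOn G I) (hGnonneg : ∀ t ∈ I, 0 ≤ G t)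
    (hfG : ∀ t ∈ I, 0 ≤ α - G t + β * G t ^ q)
    (hα : α < (1 - 1 / q) * γ) :
    (G 0 < γ → ∀ t ∈ I, G t < γ) ∧ (G 0 > γ → ∀ t ∈ I, G t > γ) := by
  have hq0 : (0:ℝ) < q := by linarith
  have hq1 : q - 1 ≠ 0 := by intro h; nlinarith
  have hβq : (0:ℝ) < β * q := by positivity
  have hγpos : 0 < γ := by rw [hγ]; exact Real.rpow_pos_of_pos hβq _
  -- key computation: β * γ ^ q = γ / q
  have hkey : β * γ ^ q = γ / q := by
    have hpow : γ ^ q = (β * q) ^ (-(1 / (q - 1)) * q) := by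
      rw [hγ, ← Real.rpow_mul hβq.le]
    have he : (1:ℝ) + (-(1 / (q - 1)) * q) = -(1 / (q - 1)) := by
      field_simp
      ring
    rw [hpow, hγ, eq_div_iff hq0.ne']
    have h2 : β * (β * q) ^ (-(1 / (q - 1)) * q) * q
        = (β * q) ^ ((1:ℝ) + -(1 / (q - 1)) * q) := by
      rw [Real.rpow_add hβq, Real.rpow_one]; ring
    rw [h2, he]
  -- f(γ) < 0
  have hfγ : α - γ + β * γ ^ q < 0 := by
    rw [hkey]
    have : (1 - 1 / q) * γ = γ - γ / q := by field_simp
    linarith [hα, this ▸ hα]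
  -- γ is not in the image of G
  have hne : ∀ t ∈ I, G t ≠ γ := by
    intro t ht h
    have := hfG t ht
    rw [h] at this
    linarith
  have hpc : IsPreconnected I := hIconv.isPreconnected
  constructor
  · intro h0γ t ht
    by_contra hle
    push_neg at hle
    have hmem : γ ∈ Set.Icc (G 0) (G t) := ⟨h0γ.le, hle⟩
    obtain ⟨t', ht', hGt'⟩ := hpc.intermediate_value h0 ht hGcont hmem
    exact hne t' ht' hGt'
  · intro h0γ t ht
    by_contra hle
    push_neg at hle
    have hmem : γ ∈ Set.Icc (G t) (G 0) := ⟨hle, h0γ.le⟩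
    obtain ⟨t', ht', hGt'⟩ := hpc.intermediate_value ht h0 hGcont hmem
    exact hne t' ht' hGt'
end
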